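/- arXiv:2602.02826 — 5 statements merged into one kernel-verified Lean document; each statement's English description precedes it below -/
import Mathlib

section
/- Let W, L > 0 and let C₀, …, C_{n−1} (n ≥ 1) be axis-aligned closed rectangles in ℝ² such that for every i ∈ {1, …, n−1} there exists a point p*_i with F(p*_i) ⊆ C_{i−1} ∩ C_i. Let p₀ and p_n be points with F(p₀) ⊆ C₀ and F(p_n) ⊆ C_{n−1}. Then there exists a continuous path γ : [0,1] → ℝ² with γ(0) = p₀, γ(1) = p_n, and F(γ(t)) ⊆ C₀ ∪ ⋯ ∪ C_{n−1} for every t ∈ [0,1]. -/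
open Set

/-- The footprint of a vehicle of width `W` and length `L` centered at `p`. -/
def footprint (W L : ℝ) (p : ℝ × ℝ) : Set (ℝ × ℝ) :=
  {q : ℝ × ℝ | |p.1 - q.1| ≤ W / 2 ∧ |p.2 - q.2| ≤ L / 2}

/-- The set of centers whose footprint fits in a convex set is convex. -/
lemma convex_fitSet (W L : ℝ) {C : Set (ℝ × ℝ)} (hC : Convex ℝ C) :
    Convex ℝ {p : ℝ × ℝ | footprint W L p ⊆ C} := by
  intro p hp p' hp' a b ha hb hab q hq
  set m : ℝ × ℝ := a • p + b • p' with hm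
  have hq1 : q + (p - m) ∈ footprint W L p := by
    refine ⟨?_, ?_⟩
    · have := hq.1
      simp only [hm, Prod.fst_add, Prod.fst_sub, Prod.smul_fst, smul_eq_mul] at this ⊢
      rw [show p.1 - (q.1 + (p.1 - (a*p.1 + b*p'.1))) = (a*p.1+b*p'.1) - q.1 by ring]
      exact this
    · have := hq.2
      simp only [hm, Prod.snd_add, Prod.snd_sub, Prod.smul_snd, smul_eq_mul] at this ⊢
      rw [show p.2 - (q.2 + (p.2 - (a*p.2 + b*p'.2))) = (a*p.2+b*p'.2) - q.2 by ring]
      exact this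
  have hq2 : q + (p' - m) ∈ footprint W L p' := by
    refine ⟨?_, ?_⟩
    · have := hq.1
      simp only [hm, Prod.fst_add, Prod.fst_sub, Prod.smul_fst, smul_eq_mul] at this ⊢
      rw [show p'.1 - (q.1 + (p'.1 - (a*p.1 + b*p'.1))) = (a*p.1+b*p'.1) - q.1 by ring]
      exact this
    · have := hq.2
      simp only [hm, Prod.snd_add, Prod.snd_sub, Prod.smul_snd, smul_eq_mul] at this ⊢
      rw [show p'.2 - (q.2 + (p'.2 - (a*p.2 + b*p'.2))) = (a*p.2+b*p'.2) - q.2 by ring]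
      exact this
  have key : q = a • (q + (p - m)) + b • (q + (p' - m)) := by
    ext
    all_goals
      simp only [hm, Prod.fst_add, Prod.fst_sub, Prod.smul_fst, Prod.snd_add, Prod.snd_sub,
        Prod.smul_snd, smul_eq_mul]
    · linear_combination ((a*p.1 + b*p'.1) - q.1) * hab
    · linear_combination ((a*p.2 + b*p'.2) - q.2) * hab
  rw [key]
  exact hC (hp hq1) (hp' hq2) ha hb hab

theorem path_through_corridor_sequence
    (W L : ℝ) (hW : 0 < W) (hL : 0 < L)
    (n : ℕ) (hn : 1 ≤ n)
    (C : ℕ → Set (ℝ × ℝ))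
    (hrect : ∀ i, i < n → ∃ a b c d : ℝ, C i = Set.Icc a b ×ˢ Set.Icc c d)
    (hoverlap : ∀ i, 1 ≤ i → i < n →
      ∃ pstar : ℝ × ℝ, footprint W L pstar ⊆ C (i - 1) ∩ C i)
    (p₀ pn : ℝ × ℝ)
    (h₀ : footprint W L p₀ ⊆ C 0)
    (hn' : footprint W L pn ⊆ C (n - 1)) :
    ∃ γ : ℝ → ℝ × ℝ, ContinuousOn γ (Set.Icc 0 1) ∧
      γ 0 = p₀ ∧ γ 1 = pn ∧
      ∀ t ∈ Set.Icc (0 : ℝ) 1, footprint W L (γ t) ⊆ ⋃ i < n, C i := by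
  set S : Set (ℝ × ℝ) := {p | footprint W L p ⊆ ⋃ i < n, C i} with hS
  have step : ∀ i, i < n → ∀ x y : ℝ × ℝ, footprint W L x ⊆ C i →
      footprint W L y ⊆ C i → JoinedIn S x y := by
    intro i hi x y hx hy
    obtain ⟨a, b, c, d, hCi⟩ := hrect i hi
    have hconv : Convex ℝ {p : ℝ × ℝ | footprint W L p ⊆ C i} := by
      refine convex_fitSet W L ?_
      rw [hCi]
      exact (convex_Icc a b).prod (convex_Icc c d)
    have hJ := (hconv.isPathConnected ⟨x, hx⟩).joinedIn x hx y hy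
    refine hJ.mono ?_
    intro p hp q hq
    exact Set.mem_biUnion hi (hp hq)
  have main : ∀ k, k < n → ∀ p : ℝ × ℝ, footprint W L p ⊆ C k → JoinedIn S p₀ p := by
    intro k
    induction k with
    | zero => exact fun hk p hp => step 0 hk p₀ p h₀ hp
    | succ k ih =>
      intro hk p hp
      obtain ⟨ps, hps⟩ := hoverlap (k + 1) (by omega) hk
      have h1 : footprint W L ps ⊆ C k := fun q hq => by
        have := (hps hq).1
        simpa using this
      have h2 : footprint W L ps ⊆ C (k + 1) := fun q hq => (hps hq).2
      exact (ih (by omega) ps h1).trans (step (k + 1) hk ps p h2 hp)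
  obtain ⟨γp, hγ⟩ := main (n - 1) (by omega) pn hn'
  refine ⟨fun t => γp (Set.projIcc 0 1 zero_le_one t), ?_, ?_, ?_, ?_⟩
  · exact (γp.continuous.comp continuous_projIcc).continuousOn
  · show γp (Set.projIcc 0 1 zero_le_one 0) = p₀
    rw [Set.projIcc_left]
    exact γp.source
  · show γp (Set.projIcc 0 1 zero_le_one 1) = pn
    rw [Set.projIcc_right]
    exact γp.target
  · intro t _
    exact hγ _
end

section
/- Let v_max, a_max > 0, let (x₀, y₀), (x₁, y₁) ∈ ℝ² and (v₀ˣ, v₀ʸ) ∈ ℝ². Define Feas_x as the set of times T > 0 for which there exists a twice-differentiable p : ℝ → ℝ with p(0) = x₀, p'(0) = v₀ˣ, p(T) = x₁, p'(T) = 0, and |p'(t)| ≤ v_max, |p''(t)| ≤ a_max for all t ∈ [0,T]; define Feas_y analogously for the y data. Define Feas₂ as the set of times T > 0 for which a trajectory P : ℝ → ℝ² with twice-differentiable components exists with P(0) = (x₀, y₀), P'(0) = (v₀ˣ, v₀ʸ), P(T) = (x₁, y₁), P'(T) = (0,0), and ‖P'(t)‖_∞ ≤ v_max, ‖P''(t)‖_∞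 ≤ a_max on [0,T]. If Feas_x and Feas_y are both nonempty, then Feas₂ is nonempty and sInf Feas₂ = max(sInf Feas_x, sInf Feas_y). -/
open Set

/-- Feasible travel times for a one-dimensional double integrator moving from
position `x₀` with initial velocity `v₀` to position `x₁` with zero terminal
velocity, under velocity bound `vmax` and acceleration bound `amax`. -/
def Feas1 (vmax amax x₀ v₀ x₁ : ℝ) : Set ℝ :=
  {T : ℝ | 0 < T ∧ ∃ p v a : ℝ → ℝ,
    (∀ t, HasDerivAt p (v t) t) ∧ (∀ t, HasDerivAt v (a t) t) ∧
    p 0 = x₀ ∧ v 0 = v₀ ∧ p T = x₁ ∧ v T = 0 ∧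
    ∀ t ∈ Set.Icc 0 T, |v t| ≤ vmax ∧ |a t| ≤ amax}

/-- Feasible travel times for the two-dimensional double integrator under
infinity-norm velocity and acceleration bounds, with zero terminal velocity. -/
def Feas2 (vmax amax x₀ y₀ v₀x v₀y x₁ y₁ : ℝ) : Set ℝ :=
  {T : ℝ | 0 < T ∧ ∃ P V A : ℝ → ℝ × ℝ,
    (∀ t, HasDerivAt P (V t) t) ∧ (∀ t, HasDerivAt V (A t) t) ∧
    P 0 = (x₀, y₀) ∧ V 0 = (v₀x, v₀y) ∧ P T = (x₁, y₁) ∧ V T = (0, 0) ∧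
    ∀ t ∈ Set.Icc 0 T,
      (|(V t).1| ≤ vmax ∧ |(V t).2| ≤ vmax) ∧
      (|(A t).1| ≤ amax ∧ |(A t).2| ≤ amax)}

/-! Projecting to the coordinates and pairing coordinates shows that the planar feasible set is
the intersection of the two one-dimensional ones, because the infinity-norm bounds decouple.
A one-dimensional feasible set is upward closed: a trajectory that arrives at rest at time `T`
can wait until any later time by oscillating about its target through a whole number of periods,
at a frequency high enough to respect both bounds. For two upward closed sets of reals the
infimum of the intersection is the larger of the two infima. -/

open Real

lemma hasDerivAt_ite_le {E : Type*} [NormedAddCommGroup E] [NormedSpace ℝ E]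
    {f g f' g' : ℝ → E} {T : ℝ}
    (hf : ∀ t, HasDerivAt f (f' t) t) (hg : ∀ t, HasDerivAt g (g' t) t)
    (hval : f T = g T) (hder : f' T = g' T) (t : ℝ) :
    HasDerivAt (fun s => if s ≤ T then f s else g s)
      (if t ≤ T then f' t else g' t) t := by
  rcases lt_trichotomy t T with h | rfl | h
  · rw [if_pos h.le]
    refine (hf t).congr_of_eventuallyEq ?_
    filter_upwards [eventually_lt_nhds h] with s hs
    rw [if_pos hs.le]
  · rw [if_pos le_rfl]
    have hleft : HasDerivWithinAt (fun s => if s ≤ t then f s else g s) (f' t) (Iic t) t :=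
      (hf t).hasDerivWithinAt.congr (fun s hs => if_pos hs) (if_pos le_rfl)
    have hright : HasDerivWithinAt (fun s => if s ≤ t then f s else g s) (f' t) (Ici t) t := by
      refine hder ▸ (hg t).hasDerivWithinAt.congr (fun s hs => ?_) (by rw [if_pos le_rfl, hval])
      rcases (mem_Ici.1 hs).eq_or_lt with rfl | hlt
      · rw [if_pos le_rfl, hval]
      · rw [if_neg (not_le.2 hlt)]
    simpa [Iic_union_Ici] using hleft.union hright
  · rw [if_neg (not_le.2 h)]
    refine (hg t).congr_of_eventuallyEq ?_
    filter_upwards [eventually_gt_nhds h] with s hs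
    rw [if_neg (not_le.2 hs)]

lemma exists_rest_to_rest_oscillation {vmax amax α : ℝ} (hv : 0 < vmax) (hα : |α| ≤ amax)
    (x T : ℝ) {δ : ℝ} (hδ : 0 < δ) :
    ∃ q w b : ℝ → ℝ, (∀ t, HasDerivAt q (w t) t) ∧ (∀ t, HasDerivAt w (b t) t) ∧
      q T = x ∧ w T = 0 ∧ b T = α ∧ q (T + δ) = x ∧ w (T + δ) = 0 ∧
      ∀ t, |w t| ≤ vmax ∧ |b t| ≤ amax := by
  -- `n` full periods of frequency `ω` fit into `[T, T + δ]`, and `ω` is large enough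
  -- that the velocity amplitude `|α| / ω` stays below `vmax`.
  obtain ⟨n, hn⟩ := exists_nat_gt (|α| * δ / (2 * π * vmax))
  have hn0 : (0 : ℝ) < n := (by positivity : 0 ≤ |α| * δ / (2 * π * vmax)).trans_lt hn
  set ω := 2 * π * n / δ
  have hω : 0 < ω := by positivity
  have hαω : |α| / ω ≤ vmax := by
    have := (div_lt_iff₀ (by positivity)).1 hn
    rw [div_le_iff₀ hω]
    simp only [ω]
    rw [mul_div_assoc', le_div_iff₀ hδ]
    linarith
  have hθ : ∀ s, HasDerivAt (fun s => ω * (s - T)) ω s := fun s => by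
    simpa using ((hasDerivAt_id s).sub_const T).const_mul ω
  have hperiod : ω * δ = n * (2 * π) := by
    simp only [ω]; field_simp
  refine ⟨fun s => x + α / ω ^ 2 * (1 - cos (ω * (s - T))), fun s => α / ω * sin (ω * (s - T)),
    fun s => α * cos (ω * (s - T)), fun s => ?_, fun s => ?_, by simp, by simp, by simp,
    by simp [hperiod, cos_nat_mul_two_pi], ?_, fun s => ⟨?_, ?_⟩⟩
  · exact (((hθ s).cos.const_sub 1).const_mul (α / ω ^ 2)).const_add x |>.congr_deriv
      (by field_simp)
  · exact (hθ s).sin.const_mul (α / ω) |>.congr_deriv (by field_simp)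
  · simp only [add_sub_cancel_left]
    rw [hperiod, show (n : ℝ) * (2 * π) = (2 * n : ℕ) * π by push_cast; ring, sin_nat_mul_pi,
      mul_zero]
  · calc |α / ω * sin (ω * (s - T))| ≤ |α / ω| * 1 := by
          rw [abs_mul]; gcongr; exact abs_sin_le_one _
      _ = |α| / ω := by rw [mul_one, abs_div, abs_of_pos hω]
      _ ≤ vmax := hαω
  · calc |α * cos (ω * (s - T))| ≤ |α| * 1 := by
          rw [abs_mul]; gcongr; exact abs_cos_le_one _
      _ ≤ amax := by rwa [mul_one]

-- The oscillation appended after `T` must start with acceleration `a T`: the glued velocity has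
-- to be differentiable at `T` with derivative `a T`.
lemma isUpperSet_Feas1 {vmax amax x₀ v₀ x₁ : ℝ} (hv : 0 < vmax) :
    IsUpperSet (Feas1 vmax amax x₀ v₀ x₁) := by
  rintro T T' hle ⟨hT, p, v, a, hpv, hva, hp0, hv0, hpT, hvT, hbd⟩
  rcases hle.eq_or_lt with rfl | hlt
  · exact ⟨hT, p, v, a, hpv, hva, hp0, hv0, hpT, hvT, hbd⟩
  have haT := (hbd T ⟨hT.le, le_rfl⟩).2
  obtain ⟨q, w, b, hqw, hwb, hqT, hwT, hbT, hqT', hwT', hbd'⟩ :=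
    exists_rest_to_rest_oscillation hv haT x₁ T (sub_pos.2 hlt)
  rw [add_sub_cancel] at hqT' hwT'
  refine ⟨hT.trans hlt, fun s => if s ≤ T then p s else q s, fun s => if s ≤ T then v s else w s,
    fun s => if s ≤ T then a s else b s, hasDerivAt_ite_le hpv hqw (hpT.trans hqT.symm)
    (hvT.trans hwT.symm), hasDerivAt_ite_le hva hwb (hvT.trans hwT.symm) hbT.symm,
    by simp [hT.le, hp0], by simp [hT.le, hv0], by simp [hlt, hqT'], by simp [hlt, hwT'],
    fun t ht => ?_⟩
  by_cases htT : t ≤ T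
  · simpa [htT] using hbd t ⟨ht.1, htT⟩
  · simpa [htT] using hbd' t

section Prod

variable {𝕜 E F : Type*} [NontriviallyNormedField 𝕜] [NormedAddCommGroup E] [NormedSpace 𝕜 E]
  [NormedAddCommGroup F] [NormedSpace 𝕜 F] {f : 𝕜 → E × F} {f' : E × F} {x : 𝕜}

protected lemma HasDerivAt.fst (h : HasDerivAt f f' x) : HasDerivAt (fun s => (f s).1) f'.1 x :=
  hasFDerivAt_fst.comp_hasDerivAt (l' := .fst 𝕜 E F) x h

protected lemma HasDerivAt.snd (h : HasDerivAt f f' x) : HasDerivAt (fun s => (f s).2) f'.2 x :=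
  hasFDerivAt_snd.comp_hasDerivAt (l' := .snd 𝕜 E F) x h

end Prod

lemma Feas2_eq_inter (vmax amax x₀ y₀ v₀x v₀y x₁ y₁ : ℝ) :
    Feas2 vmax amax x₀ y₀ v₀x v₀y x₁ y₁ =
      Feas1 vmax amax x₀ v₀x x₁ ∩ Feas1 vmax amax y₀ v₀y y₁ := by
  ext T
  constructor
  · rintro ⟨hT, P, V, A, hPV, hVA, hP0, hV0, hPT, hVT, hbd⟩
    exact ⟨⟨hT, fun s => (P s).1, fun s => (V s).1, fun s => (A s).1,
        fun t => (hPV t).fst, fun t => (hVA t).fst,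
        by simp [hP0], by simp [hV0], by simp [hPT], by simp [hVT],
        fun t ht => ⟨(hbd t ht).1.1, (hbd t ht).2.1⟩⟩,
      ⟨hT, fun s => (P s).2, fun s => (V s).2, fun s => (A s).2,
        fun t => (hPV t).snd, fun t => (hVA t).snd,
        by simp [hP0], by simp [hV0], by simp [hPT], by simp [hVT],
        fun t ht => ⟨(hbd t ht).1.2, (hbd t ht).2.2⟩⟩⟩
  · rintro ⟨⟨hT, p, v, a, hpv, hva, hp0, hv0, hpT, hvT, hbd⟩,
      ⟨-, q, w, b, hqw, hwb, hq0, hw0, hqT, hwT, hbd'⟩⟩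
    exact ⟨hT, fun s => (p s, q s), fun s => (v s, w s), fun s => (a s, b s),
      fun t => (hpv t).prodMk (hqw t), fun t => (hva t).prodMk (hwb t),
      by simp [hp0, hq0], by simp [hv0, hw0], by simp [hpT, hqT], by simp [hvT, hwT],
      fun t ht => ⟨⟨(hbd t ht).1, (hbd' t ht).1⟩, ⟨(hbd t ht).2, (hbd' t ht).2⟩⟩⟩

lemma IsUpperSet.Ioi_csInf_subset {α : Type*} [ConditionallyCompleteLinearOrder α] {s : Set α}
    (hs : IsUpperSet s) (hne : s.Nonempty) : Ioi (sInf s) ⊆ s := fun _ hx =>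
  let ⟨_, hys, hyx⟩ := exists_lt_of_csInf_lt hne hx
  hs hyx.le hys

lemma IsUpperSet.csInf_inter {α : Type*} [ConditionallyCompleteLinearOrder α] [DenselyOrdered α]
    {s t : Set α} (hs : IsUpperSet s) (ht : IsUpperSet t) (hsne : s.Nonempty) (htne : t.Nonempty)
    (hsb : BddBelow s) (htb : BddBelow t) :
    (s ∩ t).Nonempty ∧ sInf (s ∩ t) = max (sInf s) (sInf t) := by
  obtain ⟨a, has⟩ := hsne
  obtain ⟨b, hbt⟩ := htne
  have hne : (s ∩ t).Nonempty := ⟨max a b, hs (le_max_left a b) has, ht (le_max_right a b) hbt⟩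
  refine ⟨hne, le_antisymm (le_of_forall_gt_imp_ge_of_dense fun x hx => ?_) ?_⟩
  · rw [max_lt_iff] at hx
    exact csInf_le (hsb.mono inter_subset_left)
      ⟨hs.Ioi_csInf_subset ⟨a, has⟩ hx.1, ht.Ioi_csInf_subset ⟨b, hbt⟩ hx.2⟩
  · exact max_le (le_csInf hne fun x hx => csInf_le hsb hx.1)
      (le_csInf hne fun x hx => csInf_le htb hx.2)

lemma bddBelow_Feas1 (vmax amax x₀ v₀ x₁ : ℝ) : BddBelow (Feas1 vmax amax x₀ v₀ x₁) :=
  ⟨0, fun _ hT => hT.1.le⟩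

theorem bottleneck_dimension_general
    (vmax amax : ℝ) (hv : 0 < vmax)
    (x₀ y₀ x₁ y₁ v₀x v₀y : ℝ)
    (hx : (Feas1 vmax amax x₀ v₀x x₁).Nonempty)
    (hy : (Feas1 vmax amax y₀ v₀y y₁).Nonempty) :
    (Feas2 vmax amax x₀ y₀ v₀x v₀y x₁ y₁).Nonempty ∧
    sInf (Feas2 vmax amax x₀ y₀ v₀x v₀y x₁ y₁) =
      max (sInf (Feas1 vmax amax x₀ v₀x x₁)) (sInf (Feas1 vmax amax y₀ v₀y y₁)) := by
  rw [Feas2_eq_inter]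
  exact (isUpperSet_Feas1 hv).csInf_inter (isUpperSet_Feas1 hv) hx hy
    (bddBelow_Feas1 ..) (bddBelow_Feas1 ..)

theorem bottleneck_dimension
    (vmax amax : ℝ) (hv : 0 < vmax) (ha : 0 < amax)
    (x₀ y₀ x₁ y₁ v₀x v₀y : ℝ)
    (hx : (Feas1 vmax amax x₀ v₀x x₁).Nonempty)
    (hy : (Feas1 vmax amax y₀ v₀y y₁).Nonempty) :
    (Feas2 vmax amax x₀ y₀ v₀x v₀y x₁ y₁).Nonempty ∧
    sInf (Feas2 vmax amax x₀ y₀ v₀x v₀y x₁ y₁) =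
      max (sInf (Feas1 vmax amax x₀ v₀x x₁)) (sInf (Feas1 vmax amax y₀ v₀y y₁)) :=
  bottleneck_dimension_general vmax amax hv x₀ y₀ x₁ y₁ v₀x v₀y hx hy
end

section
/- Let a_max > 0, l ≤ u, and let p₀ ∈ [l, u] and v₀ ∈ ℝ with v₀ ≠ 0. Suppose the braking endpoint p₁ := p₀ + v₀·|v₀|/(2 a_max) satisfies l ≤ p₁ ≤ u. Define the braking trajectory p(t) = p₀ + v₀ t − sign(v₀)·(a_max/2)·t² on [0, |v₀|/a_max]. Then p is twice differentiable with |p''(t)| = a_max, its velocity p'(t) = v₀ − sign(v₀) a_max t satisfies |p'(t)| ≤ |v₀| and p'(|v₀|/a_max) = 0, p(|v₀|/a_max) = p₁, and l ≤ p(t) ≤ u for every t ∈ [0, |v₀|/a_max]. -/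
/-!
Write `T = |v₀| / a_max` for the stopping time and `σ = t / T ∈ [0, 1]`. Since
`sign v₀ * |v₀| = v₀`, the braking trajectory is `sign`-free in these terms:
`v t = (1 - σ) v₀` and `p t = p₀ + (1 - (1 - σ)²) (p₁ - p₀)`. So the speed only decreases,
and the position moves monotonically from `p₀` to `p₁`, staying in the convex set `[l, u]`
that contains both endpoints.
-/

open Set

theorem Real.sign_mul_abs (x : ℝ) : Real.sign x * |x| = x := by
  rcases lt_trichotomy x 0 with hx | rfl | hx
  · rw [Real.sign_of_neg hx, abs_of_neg hx, neg_one_mul, neg_neg]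
  · rw [abs_zero, mul_zero]
  · rw [Real.sign_of_pos hx, abs_of_pos hx, one_mul]

theorem Real.abs_sign_of_ne_zero {x : ℝ} (hx : x ≠ 0) : |Real.sign x| = 1 := by
  rcases Real.sign_apply_eq_of_ne_zero x hx with h | h <;> simp [h]

theorem abs_mul_le_of_mem_unitInterval {c : ℝ} (hc : c ∈ unitInterval) (x : ℝ) :
    |c * x| ≤ |x| := by
  rw [abs_mul, abs_of_nonneg hc.1]
  exact mul_le_of_le_one_left (abs_nonneg x) hc.2

theorem hasDerivAt_uniformly_accelerated (x₀ v₀ a t : ℝ) :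
    HasDerivAt (fun t => x₀ + v₀ * t + a / 2 * t ^ 2) (v₀ + a * t) t := by
  refine ((((hasDerivAt_id' t).const_mul v₀).const_add x₀).add
    ((hasDerivAt_pow 2 t).const_mul (a / 2))).congr_deriv ?_
  norm_num
  ring

theorem braking_velocity_eq {a v₀ : ℝ} (hv₀ : v₀ ≠ 0) (t : ℝ) :
    v₀ - Real.sign v₀ * a * t = (1 - t / (|v₀| / a)) * v₀ := by
  have habs : |v₀| ≠ 0 := abs_ne_zero.mpr hv₀
  field_simp
  linear_combination (-a * t) * Real.sign_mul_abs v₀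

theorem braking_position_eq {a v₀ : ℝ} (ha : a ≠ 0) (hv₀ : v₀ ≠ 0) (p₀ t : ℝ) :
    p₀ + v₀ * t - Real.sign v₀ * (a / 2) * t ^ 2 =
      p₀ + (1 - (1 - t / (|v₀| / a)) ^ 2) * (v₀ * |v₀| / (2 * a)) := by
  have habs : |v₀| ≠ 0 := abs_ne_zero.mpr hv₀
  field_simp
  linear_combination (-a ^ 2 * t ^ 2) * Real.sign_mul_abs v₀

theorem braking_trajectory_in_corridor_general
    (amax l u p₀ v₀ : ℝ) (ha : 0 < amax)
    (hp₀ : p₀ ∈ Set.Icc l u) (hv₀ : v₀ ≠ 0)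
    (p₁ : ℝ) (hp₁def : p₁ = p₀ + v₀ * |v₀| / (2 * amax))
    (hp₁ : l ≤ p₁ ∧ p₁ ≤ u)
    (p v : ℝ → ℝ)
    (hpdef : ∀ t, p t = p₀ + v₀ * t - Real.sign v₀ * (amax / 2) * t ^ 2)
    (hvdef : ∀ t, v t = v₀ - Real.sign v₀ * amax * t) :
    (∀ t, HasDerivAt p (v t) t) ∧
    (∀ t, HasDerivAt v (-(Real.sign v₀) * amax) t) ∧
    |(-(Real.sign v₀) * amax)| = amax ∧
    (∀ t ∈ Set.Icc 0 (|v₀| / amax), |v t| ≤ |v₀|) ∧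
    v (|v₀| / amax) = 0 ∧
    p (|v₀| / amax) = p₁ ∧
    (∀ t ∈ Set.Icc 0 (|v₀| / amax), l ≤ p t ∧ p t ≤ u) := by
  set T := |v₀| / amax
  have hTT : T / T = 1 := div_self (div_pos (abs_pos.mpr hv₀) ha).ne'
  have hσ : ∀ t ∈ Icc 0 T, t / T ∈ unitInterval := fun t ht =>
    unitInterval.div_mem ht.1 (ht.1.trans ht.2) ht.2
  have hv_eq : ∀ t, v t = (1 - t / T) * v₀ := fun t =>
    (hvdef t).trans (braking_velocity_eq hv₀ t)
  have hp_eq : ∀ t, p t = p₀ + (1 - (1 - t / T) ^ 2) * (p₁ - p₀) := fun t => by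
    rw [hpdef, braking_position_eq ha.ne' hv₀, hp₁def, add_sub_cancel_left]
  refine ⟨fun t => ?_, fun t => ?_, ?_, fun t ht => ?_, ?_, ?_, fun t ht => ?_⟩
  · have hp : p = fun t => p₀ + v₀ * t + -Real.sign v₀ * amax / 2 * t ^ 2 :=
      funext fun t => (hpdef t).trans (by ring)
    rw [hp, hvdef]
    exact (hasDerivAt_uniformly_accelerated _ _ _ t).congr_deriv (by ring)
  · rw [funext hvdef]
    exact (((hasDerivAt_id' t).const_mul _).const_sub v₀).congr_deriv (by ring)
  · rw [abs_mul, abs_neg, Real.abs_sign_of_ne_zero hv₀, one_mul, abs_of_pos ha]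
  · rw [hv_eq]
    exact abs_mul_le_of_mem_unitInterval (Icc.mem_iff_one_sub_mem.mp (hσ t ht)) v₀
  · rw [hv_eq, hTT, sub_self, zero_mul]
  · rw [hp_eq, hTT]
    ring
  · have hθ : 1 - (1 - t / T) ^ 2 ∈ unitInterval := by
      have h := Icc.mem_iff_one_sub_mem.mp (hσ t ht)
      exact Icc.mem_iff_one_sub_mem.mp (sq (1 - t / T) ▸ unitInterval.mul_mem h h)
    rw [hp_eq]
    exact (convex_Icc l u).add_smul_sub_mem hp₀ hp₁ hθ

theorem braking_trajectory_in_corridor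
    (amax l u p₀ v₀ : ℝ) (ha : 0 < amax) (hlu : l ≤ u)
    (hp₀ : p₀ ∈ Set.Icc l u) (hv₀ : v₀ ≠ 0)
    (p₁ : ℝ) (hp₁def : p₁ = p₀ + v₀ * |v₀| / (2 * amax))
    (hp₁ : l ≤ p₁ ∧ p₁ ≤ u)
    (p v : ℝ → ℝ)
    (hpdef : ∀ t, p t = p₀ + v₀ * t - Real.sign v₀ * (amax / 2) * t ^ 2)
    (hvdef : ∀ t, v t = v₀ - Real.sign v₀ * amax * t) :
    (∀ t, HasDerivAt p (v t) t) ∧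
    (∀ t, HasDerivAt v (-(Real.sign v₀) * amax) t) ∧
    |(-(Real.sign v₀) * amax)| = amax ∧
    (∀ t ∈ Set.Icc 0 (|v₀| / amax), |v t| ≤ |v₀|) ∧
    v (|v₀| / amax) = 0 ∧
    p (|v₀| / amax) = p₁ ∧
    (∀ t ∈ Set.Icc 0 (|v₀| / amax), l ≤ p t ∧ p t ≤ u) :=
  braking_trajectory_in_corridor_general amax l u p₀ v₀ ha hp₀ hv₀ p₁ hp₁def hp₁ p v hpdef hvdef
end

section
/- Let a_max > 0, d > 0, T > 0, and let p : ℝ → ℝ be differentiable with derivative v, and v differentiable with derivative a satisfying |a(t)| ≤ a_max for all t ∈ [0,T]. Suppose p(0) = 0, p(T) = d, v(0) = 0 and v(T) = 0. Then T ≥ 2√(d/a_max). -/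
/-!
Starting from rest, `v t ≤ C (t - t₀)`, so the position can advance by at most `C s² / 2` in
time `s`; the same holds backwards in time from the final rest state. Splitting `[0, T]` at its
midpoint gives `d ≤ a_max T² / 4`.
-/

open Set

section RestToRest

variable {p v a : ℝ → ℝ} {C t₀ t₁ : ℝ}

theorem sub_le_half_mul_sq_of_rest_left (hp : ∀ t, HasDerivAt p (v t) t)
    (hv : ∀ t, HasDerivAt v (a t) t) (ha : ∀ t ∈ Icc t₀ t₁, a t ≤ C) (hv₀ : v t₀ = 0)
    (h : t₀ ≤ t₁) : p t₁ - p t₀ ≤ C / 2 * (t₁ - t₀) ^ 2 := by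
  have hv_le : ∀ t ∈ Icc t₀ t₁, v t ≤ C * (t - t₀) := fun t ht => by
    have := (convex_Icc t₀ t₁).image_sub_le_mul_sub_of_deriv_le
      (fun s _ => (hv s).continuousAt.continuousWithinAt)
      (fun s _ => (hv s).differentiableAt.differentiableWithinAt)
      (fun s hs => (hv s).deriv ▸ ha s (interior_subset hs)) t₀ (left_mem_Icc.2 h) t ht ht.1
    linarith
  set q : ℝ → ℝ := fun t => p t - C / 2 * (t - t₀) ^ 2
  have hq : ∀ t, HasDerivAt q (v t - C * (t - t₀)) t := fun t =>
    ((hp t).sub ((((hasDerivAt_id t).sub_const t₀).pow 2).const_mul (C / 2))).congr_deriv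
      (by simp only [id]; ring)
  have := (convex_Icc t₀ t₁).image_sub_le_mul_sub_of_deriv_le
    (fun s _ => (hq s).continuousAt.continuousWithinAt)
    (fun s _ => (hq s).differentiableAt.differentiableWithinAt)
    (fun s hs => (hq s).deriv ▸ sub_nonpos.2 (hv_le s (interior_subset hs)))
    t₀ (left_mem_Icc.2 h) t₁ (right_mem_Icc.2 h) h
  simp only [q, sub_self, zero_mul] at this
  linarith

theorem sub_le_half_mul_sq_of_rest_right (hp : ∀ t, HasDerivAt p (v t) t)
    (hv : ∀ t, HasDerivAt v (a t) t) (ha : ∀ t ∈ Icc t₀ t₁, -C ≤ a t) (hv₁ : v t₁ = 0)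
    (h : t₀ ≤ t₁) : p t₁ - p t₀ ≤ C / 2 * (t₁ - t₀) ^ 2 := by
  have hp' : ∀ s, HasDerivAt (fun s => -p (-s)) (v (-s)) s := fun s =>
    ((hp (-s)).comp s (hasDerivAt_neg' s)).neg.congr_deriv (by ring)
  have hv' : ∀ s, HasDerivAt (fun s => v (-s)) (-a (-s)) s := fun s =>
    ((hv (-s)).comp s (hasDerivAt_neg' s)).congr_deriv (by ring)
  have := sub_le_half_mul_sq_of_rest_left hp' hv' (t₀ := -t₁) (t₁ := -t₀)
    (fun s hs => neg_le.1 (ha (-s) ⟨le_neg.1 hs.2, neg_le.1 hs.1⟩)) (by simpa using hv₁)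
    (neg_le_neg h)
  simp only [neg_neg] at this
  linarith

theorem sub_le_mul_sq_div_four_of_rest_to_rest (hp : ∀ t, HasDerivAt p (v t) t)
    (hv : ∀ t, HasDerivAt v (a t) t) (ha : ∀ t ∈ Icc t₀ t₁, |a t| ≤ C) (hv₀ : v t₀ = 0)
    (hv₁ : v t₁ = 0) (h : t₀ ≤ t₁) : p t₁ - p t₀ ≤ C * (t₁ - t₀) ^ 2 / 4 := by
  set m := (t₀ + t₁) / 2 with hm
  have first_half := sub_le_half_mul_sq_of_rest_left hp hv
    (fun t ht => (abs_le.1 (ha t ⟨ht.1, by linarith [ht.2]⟩)).2) hv₀ (by linarith : t₀ ≤ m)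
  have second_half := sub_le_half_mul_sq_of_rest_right hp hv
    (fun t ht => (abs_le.1 (ha t ⟨by linarith [ht.1], ht.2⟩)).1) hv₁ (by linarith : m ≤ t₁)
  rw [show m - t₀ = (t₁ - t₀) / 2 by ring] at first_half
  rw [show t₁ - m = (t₁ - t₀) / 2 by ring] at second_half
  linarith

end RestToRest

theorem rest_to_rest_time_lower_bound_general
    (amax d T : ℝ) (ha : 0 < amax) (hT : 0 < T)
    (p v a : ℝ → ℝ)
    (hp : ∀ t, HasDerivAt p (v t) t)
    (hv : ∀ t, HasDerivAt v (a t) t)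
    (hab : ∀ t ∈ Set.Icc 0 T, |a t| ≤ amax)
    (hp0 : p 0 = 0) (hpT : p T = d)
    (hv0 : v 0 = 0) (hvT : v T = 0) :
    2 * Real.sqrt (d / amax) ≤ T := by
  have hdist : d ≤ amax * T ^ 2 / 4 := by
    simpa [hp0, hpT] using sub_le_mul_sq_div_four_of_rest_to_rest hp hv hab hv0 hvT hT.le
  have : Real.sqrt (d / amax) ≤ T / 2 := by
    rw [Real.sqrt_le_left (by positivity), div_le_iff₀ ha]
    linarith
  linarith

theorem rest_to_rest_time_lower_bound
    (amax d T : ℝ) (ha : 0 < amax) (hd : 0 < d) (hT : 0 < T)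
    (p v a : ℝ → ℝ)
    (hp : ∀ t, HasDerivAt p (v t) t)
    (hv : ∀ t, HasDerivAt v (a t) t)
    (hab : ∀ t ∈ Set.Icc 0 T, |a t| ≤ amax)
    (hp0 : p 0 = 0) (hpT : p T = d)
    (hv0 : v 0 = 0) (hvT : v T = 0) :
    2 * Real.sqrt (d / amax) ≤ T :=
  rest_to_rest_time_lower_bound_general amax d T ha hT p v a hp hv hab hp0 hpT hv0 hvT
end

section
/- Let v_max, a_max > 0, let d ≥ v_max²/a_max, let T > 0, and let p : ℝ → ℝ be differentiable with derivative v, and v differentiable with derivative a satisfying |v(t)| ≤ v_max and |a(t)| ≤ a_max for all t ∈ [0,T]. Suppose p(0) = 0, p(T) = d, v(0) = 0 and v(T) = 0. Then T ≥ d/v_max + v_max/a_max. -/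
open Set

theorem rest_to_rest_time_lower_bound_long_distance
    (vmax amax d T : ℝ) (hv : 0 < vmax) (ha : 0 < amax)
    (hd : vmax ^ 2 / amax ≤ d) (hT : 0 < T)
    (p v a : ℝ → ℝ)
    (hp : ∀ t, HasDerivAt p (v t) t)
    (hvd : ∀ t, HasDerivAt v (a t) t)
    (hvb : ∀ t ∈ Set.Icc 0 T, |v t| ≤ vmax)
    (hab : ∀ t ∈ Set.Icc 0 T, |a t| ≤ amax)
    (hp0 : p 0 = 0) (hpT : p T = d)
    (hv0 : v 0 = 0) (hvT : v T = 0) :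
    d / vmax + vmax / amax ≤ T := by
  have hvC : Continuous v := by
    rw [continuous_iff_continuousAt]; exact fun t => (hvd t).continuousAt
  have hint : ∀ x y : ℝ, IntervalIntegrable v MeasureTheory.volume x y :=
    fun x y => hvC.intervalIntegrable x y
  have ilin : ∀ x y : ℝ, IntervalIntegrable (fun t => amax * t) MeasureTheory.volume x y :=
    fun x y => (continuous_const.mul continuous_id').intervalIntegrable x y
  have ilin2 : ∀ x y : ℝ, IntervalIntegrable (fun t => amax * (T - t)) MeasureTheory.volume x y :=
    fun x y => (continuous_const.mul (continuous_const.sub continuous_id')).intervalIntegrable x y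
  -- key Lipschitz bounds on v
  have key : ∀ x ∈ Icc (0:ℝ) T, ∀ y ∈ Icc (0:ℝ) T, |v y - v x| ≤ amax * |y - x| := by
    intro x hx y hy
    have h := Convex.norm_image_sub_le_of_norm_hasDerivWithin_le
      (f := v) (f' := a) (s := Icc 0 T) (C := amax)
      (fun t _ => (hvd t).hasDerivWithinAt)
      (fun t ht => le_trans (le_of_eq (Real.norm_eq_abs _)) (hab t ht))
      (convex_Icc 0 T) hx hy
    rw [Real.norm_eq_abs, Real.norm_eq_abs] at h
    exact h
  have hb1 : ∀ t ∈ Icc (0:ℝ) T, v t ≤ amax * t := by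
    intro t ht
    have h := key 0 ⟨le_refl 0, hT.le⟩ t ht
    rw [hv0, sub_zero, sub_zero, abs_of_nonneg ht.1] at h
    exact (le_abs_self _).trans h
  have hb2 : ∀ t ∈ Icc (0:ℝ) T, v t ≤ amax * (T - t) := by
    intro t ht
    have h := key T ⟨hT.le, le_refl T⟩ t ht
    rw [hvT, sub_zero, abs_of_nonpos (by linarith [ht.2] : t - T ≤ 0)] at h
    have h2 : v t ≤ amax * -(t - T) := (le_abs_self _).trans h
    linarith
  have hb3 : ∀ t ∈ Icc (0:ℝ) T, v t ≤ vmax := fun t ht =>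
    (le_abs_self _).trans (hvb t ht)
  -- total distance
  have hdint : ∫ t in (0:ℝ)..T, v t = d := by
    rw [intervalIntegral.integral_eq_sub_of_hasDerivAt (fun t _ => hp t) (hint 0 T),
      hpT, hp0, sub_zero]
  set s : ℝ := vmax / amax with hs_def
  have hs : 0 < s := div_pos hv ha
  have hsa : amax * s = vmax := by rw [hs_def]; field_simp
  -- convenient integral computations
  have int_lin : ∀ x y : ℝ, ∫ t in x..y, amax * t = amax * (y ^ 2 - x ^ 2) / 2 := by
    intro x y
    rw [intervalIntegral.integral_const_mul, integral_id]; ring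
  have int_lin2 : ∀ x y : ℝ, ∫ t in x..y, amax * (T - t)
      = amax * T * (y - x) - amax * (y ^ 2 - x ^ 2) / 2 := by
    intro x y
    have he : (fun t => amax * (T - t)) = fun t => amax * T - amax * t := by
      funext t; ring
    rw [he, intervalIntegral.integral_sub intervalIntegrable_const (ilin x y),
      intervalIntegral.integral_const, intervalIntegral.integral_const_mul, integral_id]
    simp only [smul_eq_mul]; ring
  -- Step A: T ≥ 2s
  have h2s : 2 * s ≤ T := by
    have hhalf : (0:ℝ) ≤ T / 2 := by linarith
    have e1 : ∫ t in (0:ℝ)..(T/2), v t ≤ amax * T ^ 2 / 8 := by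
      have h := intervalIntegral.integral_mono_on hhalf (hint 0 (T/2)) (ilin 0 (T/2))
        (fun t ht => hb1 t ⟨ht.1, ht.2.trans (by linarith)⟩)
      rw [int_lin] at h
      calc ∫ t in (0:ℝ)..(T/2), v t ≤ amax * ((T/2) ^ 2 - 0 ^ 2) / 2 := h
        _ = amax * T ^ 2 / 8 := by ring
    have e2 : ∫ t in (T/2)..T, v t ≤ amax * T ^ 2 / 8 := by
      have h := intervalIntegral.integral_mono_on (by linarith : T/2 ≤ T) (hint (T/2) T)
        (ilin2 (T/2) T) (fun t ht => hb2 t ⟨hhalf.trans ht.1, ht.2⟩)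
      rw [int_lin2] at h
      calc ∫ t in (T/2)..T, v t ≤ amax * T * (T - T/2) - amax * (T ^ 2 - (T/2) ^ 2) / 2 := h
        _ = amax * T ^ 2 / 8 := by ring
    have hsplit : (∫ t in (0:ℝ)..(T/2), v t) + (∫ t in (T/2)..T, v t) = d := by
      rw [intervalIntegral.integral_add_adjacent_intervals (hint 0 (T/2)) (hint (T/2) T), hdint]
    have hds : amax * s ^ 2 ≤ d := by
      have he : amax * s ^ 2 = vmax ^ 2 / amax := by rw [hs_def]; field_simp
      rw [he]; exact hd
    have hdT : d ≤ amax * T ^ 2 / 4 := by linarith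
    by_contra hcon
    push_neg at hcon
    nlinarith [mul_pos ha (mul_pos (by linarith : (0:ℝ) < 2 * s - T) (by linarith : (0:ℝ) < 2 * s + T))]
  -- Step B
  have e1 : ∫ t in (0:ℝ)..s, v t ≤ vmax * s / 2 := by
    have h := intervalIntegral.integral_mono_on hs.le (hint 0 s) (ilin 0 s)
      (fun t ht => hb1 t ⟨ht.1, ht.2.trans (by linarith)⟩)
    rw [int_lin] at h
    calc ∫ t in (0:ℝ)..s, v t ≤ amax * (s ^ 2 - 0 ^ 2) / 2 := h
      _ = (amax * s) * s / 2 := by ring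
      _ = vmax * s / 2 := by rw [hsa]
  have e2 : ∫ t in s..(T - s), v t ≤ vmax * (T - 2 * s) := by
    have h := intervalIntegral.integral_mono_on (by linarith : s ≤ T - s) (hint s (T - s))
      intervalIntegrable_const
      (fun t ht => hb3 t ⟨hs.le.trans ht.1, ht.2.trans (by linarith)⟩)
    rw [intervalIntegral.integral_const, smul_eq_mul] at h
    calc ∫ t in s..(T - s), v t ≤ (T - s - s) * vmax := h
      _ = vmax * (T - 2 * s) := by ring
  have e3 : ∫ t in (T - s)..T, v t ≤ vmax * s / 2 := by
    have h := intervalIntegral.integral_mono_on (by linarith : T - s ≤ T) (hint (T - s) T)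
      (ilin2 (T - s) T)
      (fun t ht => hb2 t ⟨(by linarith [ht.1] : (0:ℝ) ≤ t), ht.2⟩)
    rw [int_lin2] at h
    calc ∫ t in (T - s)..T, v t ≤ amax * T * (T - (T - s)) - amax * (T ^ 2 - (T - s) ^ 2) / 2 := h
      _ = (amax * s) * s / 2 := by ring
      _ = vmax * s / 2 := by rw [hsa]
  have hsplit : (∫ t in (0:ℝ)..s, v t) + (∫ t in s..(T - s), v t) + (∫ t in (T - s)..T, v t) = d := by
    rw [intervalIntegral.integral_add_adjacent_intervals (hint 0 s) (hint s (T - s)),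
      intervalIntegral.integral_add_adjacent_intervals (hint 0 (T - s)) (hint (T - s) T), hdint]
  have hdle : d ≤ vmax * (T - s) := by linarith
  rw [div_add_div _ _ (ne_of_gt hv) (ne_of_gt ha), div_le_iff₀ (by positivity)]
  nlinarith [mul_le_mul_of_nonneg_right hdle ha.le, hsa, mul_pos hv ha]
end
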